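/- arXiv:1602.05982 — 2 statements merged into one kernel-verified Lean document; each statement's English description precedes it below -/
import Mathlib

section
/- For every integer K ≥ 2, letting c_1,…,c_{K−1} be the unique real constants such that the system {∂^jγ/∂t^j(x,t) = 0, j = 1,…,K−1} is equivalent to {x_r = c_r·t^{r+1}, r = 1,…,K−1}, there exists a nonzero real constant C, depending only on K, such that γ(c_1 t^2, c_2 t^3, …, c_{K−1} t^K, t) = C·t^{K+1} for all t ∈ ℝ. (In particular, along the closure of A_{K−1} near an A_K point, the last component of the normal form equals a nonzero constant times t^{K+1}.) -/
/-!
By weighted homogeneity, `γ(c₁t², …, c_{K-1}t^K, t) = γ(c, 1) · t^(K+1)`, so the constant is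
`C = γ(c, 1)`. The hypothesis at `t = 1` says that the derivatives of orders `1, …, K-1` of
`p = γ(c, ·)` vanish at `1`. If `C = p(1)` were `0` too, then `1` would be a root of multiplicity
at least `K` of the monic polynomial `p` of degree `K + 1`, which also vanishes at `0`; hence
`p = t (t - 1)^K`. But `p` has no `t^K` term, whereas that of `t (t - 1)^K` is `-K`.
-/

open Polynomial Finset

theorem Polynomial.iteratedDeriv_eval {𝕜 : Type*} [NontriviallyNormedField 𝕜] (p : 𝕜[X])
    (n : ℕ) : iteratedDeriv n (fun s => p.eval s) = fun s => (derivative^[n] p).eval s := by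
  induction n with
  | zero => simp
  | succ n ih =>
    funext s
    rw [iteratedDeriv_succ, ih, Function.iterate_succ_apply', Polynomial.deriv]

section MorinPoly

variable {R : Type*} [CommRing R] (K : ℕ) (x : ℕ → R)

/-- `γ(x, ·)` as a polynomial in the distinguished variable `t`. -/
noncomputable def morinPoly : R[X] :=
  X ^ (K + 1) + ∑ i ∈ Icc 1 (K - 1), C (x i) * X ^ (K - i)

theorem eval_morinPoly (s : R) :
    (morinPoly K x).eval s = s ^ (K + 1) + ∑ i ∈ Icc 1 (K - 1), x i * s ^ (K - i) := by
  simp [morinPoly, eval_finsetSum]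

theorem eval_morinPoly_weighted (t : R) :
    (morinPoly K (fun i => x i * t ^ (i + 1))).eval t = (morinPoly K x).eval 1 * t ^ (K + 1) := by
  have hweight : ∀ i ∈ Icc 1 (K - 1), x i * t ^ (i + 1) * t ^ (K - i) = x i * t ^ (K + 1) := by
    intro i hi
    rw [mul_assoc, ← pow_add, Nat.add_right_comm, Nat.add_sub_cancel' (by grind)]
  simp only [eval_morinPoly, one_pow, mul_one, sum_congr rfl hweight, ← sum_mul]
  ring

theorem degree_sum_C_mul_X_pow_sub_lt :
    (∑ i ∈ Icc 1 (K - 1), C (x i) * X ^ (K - i)).degree < (K : WithBot ℕ) :=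
  (degree_sum_le _ _).trans_lt <| (Finset.sup_lt_iff (WithBot.bot_lt_coe K)).2 fun i hi =>
    (degree_C_mul_X_pow_le _ _).trans_lt <| by
      have := mem_Icc.1 hi
      exact WithBot.coe_lt_coe.2 (show K - i < K by omega)

theorem monic_morinPoly : (morinPoly K x).Monic :=
  monic_X_pow_add ((degree_sum_C_mul_X_pow_sub_lt K x).trans (by exact_mod_cast K.lt_succ_self))

theorem natDegree_morinPoly [Nontrivial R] : (morinPoly K x).natDegree = K + 1 := by
  have hlt : (∑ i ∈ Icc 1 (K - 1), C (x i) * X ^ (K - i)).degree <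
      (X ^ (K + 1) : R[X]).degree := by
    rw [degree_X_pow]
    exact (degree_sum_C_mul_X_pow_sub_lt K x).trans (by exact_mod_cast K.lt_succ_self)
  rw [morinPoly, natDegree_add_eq_left_of_degree_lt hlt, natDegree_X_pow]

theorem nextCoeff_morinPoly [Nontrivial R] : (morinPoly K x).nextCoeff = 0 := by
  rw [nextCoeff_of_natDegree_pos (by rw [natDegree_morinPoly]; omega), natDegree_morinPoly,
    Nat.add_sub_cancel, morinPoly, coeff_add, coeff_X_pow, if_neg K.succ_ne_self.symm, zero_add,
    finsetSum_coeff]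
  refine sum_eq_zero fun i hi => ?_
  rw [coeff_C_mul, coeff_X_pow, if_neg (by grind), mul_zero]

theorem isRoot_morinPoly_zero : (morinPoly K x).IsRoot 0 := by
  simp only [IsRoot, eval_morinPoly, zero_pow K.succ_ne_zero, zero_add]
  exact sum_eq_zero fun i hi => by rw [zero_pow (by grind), mul_zero]

end MorinPoly

theorem morinPoly_eq_X_mul_X_sub_C_pow {F : Type*} [Field F] {K : ℕ} {x : ℕ → F} {a : F}
    (ha : a ≠ 0) (hmult : K ≤ (morinPoly K x).rootMultiplicity a) :
    morinPoly K x = X * (X - C a) ^ K := by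
  have hcop : IsCoprime (X : F[X]) ((X - C a) ^ K) := by
    have := isCoprime_X_sub_C_of_isUnit_sub (R := F) (a := 0) (b := a) (by simpa using ha)
    rw [map_zero, sub_zero] at this
    exact this.pow_right
  have hX : X ∣ morinPoly K x := by
    simpa using dvd_iff_isRoot.2 (isRoot_morinPoly_zero K x)
  have hdvd : X * (X - C a) ^ K ∣ morinPoly K x :=
    hcop.mul_dvd hX ((pow_dvd_pow _ hmult).trans (pow_rootMultiplicity_dvd _ a))
  refine eq_of_monic_of_dvd_of_natDegree_le (monic_X.mul ((monic_X_sub_C a).pow K))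
    (monic_morinPoly K x) hdvd ?_
  rw [natDegree_morinPoly, natDegree_mul X_ne_zero (pow_ne_zero _ (X_sub_C_ne_zero a)),
    natDegree_X, natDegree_pow, natDegree_X_sub_C, mul_one, add_comm]

theorem rootMultiplicity_morinPoly_lt {F : Type*} [Field F] [CharZero F] {K : ℕ} (hK : 1 ≤ K)
    (x : ℕ → F) {a : F} (ha : a ≠ 0) : (morinPoly K x).rootMultiplicity a < K := by
  by_contra! hmult
  have hX : (X : F[X]).nextCoeff = 0 := by simp [nextCoeff]
  have hcoeff := congrArg nextCoeff (morinPoly_eq_X_mul_X_sub_C_pow ha hmult)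
  rw [nextCoeff_morinPoly, monic_X.nextCoeff_mul ((monic_X_sub_C a).pow K),
    (monic_X_sub_C a).nextCoeff_pow, nextCoeff_X_sub_C, hX, zero_add, smul_neg, zero_eq_neg,
    smul_eq_zero] at hcoeff
  rcases hcoeff with hK0 | ha0
  · omega
  · exact ha ha0

/-- For `K ≥ 2`, if `c_1, …, c_{K-1}` are constants such that the system
`∂^j γ/∂t^j (x,t) = 0` for `j = 1, …, K-1` is equivalent to `x r = c r * t^(r+1)`
for `r = 1, …, K-1`, then there is a nonzero constant `C` with
`γ(c_1 t^2, …, c_{K-1} t^K, t) = C * t^(K+1)` for all `t`, where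
`γ(x,t) = t^(K+1) + ∑_{i=1}^{K-1} x i * t^(K-i)`. -/
theorem stmt3 (K : ℕ) (hK : 2 ≤ K) (c : ℕ → ℝ)
    (hc : ∀ (x : ℕ → ℝ) (t : ℝ),
        (∀ j ∈ Finset.Icc 1 (K - 1),
            iteratedDeriv j
              (fun s : ℝ => s ^ (K + 1) + ∑ i ∈ Finset.Icc 1 (K - 1), x i * s ^ (K - i)) t = 0)
          ↔ (∀ r ∈ Finset.Icc 1 (K - 1), x r = c r * t ^ (r + 1))) :
    ∃ C : ℝ, C ≠ 0 ∧ ∀ t : ℝ,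
      t ^ (K + 1) + ∑ i ∈ Finset.Icc 1 (K - 1), (c i * t ^ (i + 1)) * t ^ (K - i)
        = C * t ^ (K + 1) := by
  refine ⟨(morinPoly K c).eval 1, fun hroot => ?_, fun t => ?_⟩
  · have hderiv := (hc c 1).2 fun r _ => by rw [one_pow, mul_one]
    simp only [← eval_morinPoly, Polynomial.iteratedDeriv_eval] at hderiv
    have hroots : ∀ m ≤ K - 1, (derivative^[m] (morinPoly K c)).IsRoot 1
      | 0, _ => hroot
      | m + 1, hm => hderiv (m + 1) (mem_Icc.2 ⟨m.succ_pos, hm⟩)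
    have hlt := lt_rootMultiplicity_of_isRoot_iterate_derivative_of_mem_nonZeroDivisors
      (monic_morinPoly K c).ne_zero hroots (mem_nonZeroDivisors_of_ne_zero (by positivity))
    have hgt := rootMultiplicity_morinPoly_lt (K := K) (by omega) c one_ne_zero
    omega
  · simpa only [eval_morinPoly] using eval_morinPoly_weighted K c t
end

section
/- For every integer K ≥ 3, letting α_2,…,α_{K−1} and β_2,…,β_{K−1} be the unique real constants such that the system {∂^jγ/∂t^j(x,t) = 0, j = 1,…,K−2} is equivalent to {x_r = α_r·t^{r+1} + β_r·x_1·t^{r−1}, r = 2,…,K−1}, there exist nonzero real constants A and B, depending only on K, such that for all (x_1, t) ∈ ℝ², substituting x_r = α_r t^{r+1} + β_r x_1 t^{r−1} (r = 2,…,K−1) into γ yields γ(x_1, α_2 t^3 + β_2 x_1 t, …, α_{K−1} t^K + β_{K−1} x_1 t^{K−2}, t) = A·t^{K+1} + B·x_1·t^{K−1}. -/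
/-!
At `t = 1` the relations `x_r = α_r + β_r x₁` solve the derivative system for every `x₁`;
taking `x₁ = 0` and `x₁ = 1` shows that `P = X^(K+1) + ∑_{r≥2} α_r X^(K-r)` and
`Q = X^(K-1) + ∑_{r≥2} β_r X^(K-r)` have vanishing derivatives of orders `1, …, K-2` at `1`.
After the substitution `γ = P(1) t^(K+1) + Q(1) x₁ t^(K-1)`, so it remains to see that
`P(1), Q(1) ≠ 0`. Both have the form `X^N + w` with `deg w < n := K - 1 ≤ N` and `w(0) = 0`.
If such a polynomial also vanished at `1`, its Taylor coefficients at `1` would be `0` below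
order `n` and those of `X^N` from order `n` on; evaluating the Taylor expansion at `0` gives
`w(0) = (-1)^n C(N-1, n-1) ≠ 0`.
-/

open Polynomial Finset

namespace Polynomial

theorem iteratedDeriv_eval_s5 {𝕜 : Type*} [NontriviallyNormedField 𝕜] (n : ℕ) (p : 𝕜[X]) :
    iteratedDeriv n (fun s => p.eval s) = fun s => (derivative^[n] p).eval s := by
  induction n generalizing p with
  | zero => simp
  | succ n ih =>
    have h : _root_.deriv (fun s => p.eval s) = fun s => p.derivative.eval s := by
      ext s; exact p.deriv
    rw [iteratedDeriv_succ', h, ih, Function.iterate_succ_apply]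

theorem eval_zero_X_pow_add_eq_of_eval_hasseDeriv_eq_zero {R : Type*} [CommRing R] {a : R}
    {n N : ℕ} (hn : 0 < n) (hnN : n ≤ N) {w : R[X]} (hw : w.natDegree < n)
    (h : ∀ k < n, (hasseDeriv k (X ^ N + w)).eval a = 0) :
    (X ^ N + w).eval 0 = (-1) ^ n * a ^ N * ((N - 1).choose (n - 1) : R) := by
  have htaylor : taylor a (X ^ N + w) =
      (X + C a) ^ N - ∑ k ∈ range n, monomial k (a ^ (N - k) * (N.choose k : R)) := by
    ext k
    rw [coeff_sub, finsetSum_coeff, taylor_coeff, coeff_X_add_C_pow]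
    simp only [coeff_monomial, sum_ite_eq', mem_range]
    by_cases hk : k < n
    · rw [h k hk, if_pos hk, sub_self]
    · rw [if_neg hk, sub_zero, map_add, hasseDeriv_eq_zero_of_lt_natDegree w k (by omega),
        add_zero, ← coeff_X_add_C_pow, ← taylor_X_pow, taylor_coeff]
  obtain ⟨m, rfl⟩ : ∃ m, n = m + 1 := ⟨n - 1, by omega⟩
  obtain ⟨M, rfl⟩ : ∃ M, N = M + 1 := ⟨N - 1, by omega⟩
  have hterm : ∀ k ∈ range (m + 1), a ^ (M + 1 - k) * ((M + 1).choose k : R) * (-a) ^ k =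
      a ^ (M + 1) * ((-1) ^ k * ((M + 1).choose k : R)) := by
    intro k hk
    rw [mem_range] at hk
    rw [neg_pow, ← pow_sub_mul_pow a (show k ≤ M + 1 by omega)]
    ring
  have halt : ∑ k ∈ range (m + 1), (-1) ^ k * ((M + 1).choose k : R) =
      (-1) ^ m * (M.choose m : R) := by
    have := congrArg (Int.cast : ℤ → R)
      (Int.alternating_sum_range_choose_eq_choose (n := M) (m := m))
    push_cast at this
    exact this
  rw [← taylor_eval_sub a, htaylor, zero_sub, eval_sub, eval_finsetSum]
  simp only [eval_pow, eval_add, eval_X, eval_C, eval_monomial, neg_add_cancel,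
    sum_congr rfl hterm, ← mul_sum, halt, Nat.add_sub_cancel]
  ring

section CharZero

variable {R : Type*} [CommRing R] [IsDomain R] [CharZero R]

theorem eval_hasseDeriv_eq_zero_of_eval_iterate_derivative_eq_zero {p : R[X]} {a : R} {k : ℕ}
    (h : (derivative^[k] p).eval a = 0) : (hasseDeriv k p).eval a = 0 := by
  rw [← factorial_smul_hasseDeriv, LinearMap.smul_apply, eval_smul, nsmul_eq_mul] at h
  exact (mul_eq_zero.1 h).resolve_left (Nat.cast_ne_zero.2 k.factorial_ne_zero)

theorem eval_X_pow_add_ne_zero_of_eval_iterate_derivative_eq_zero {a : R} (ha : a ≠ 0)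
    {n N : ℕ} (hn : 0 < n) (hnN : n ≤ N) {w : R[X]} (hw : w.natDegree < n) (hw0 : w.eval 0 = 0)
    (h : ∀ k ∈ Icc 1 (n - 1), (derivative^[k] (X ^ N + w)).eval a = 0) :
    (X ^ N + w).eval a ≠ 0 := by
  intro h0
  have hval := eval_zero_X_pow_add_eq_of_eval_hasseDeriv_eq_zero hn hnN hw fun k hk => by
    rcases Nat.eq_zero_or_pos k with rfl | hk0
    · rwa [hasseDeriv_zero']
    · exact eval_hasseDeriv_eq_zero_of_eval_iterate_derivative_eq_zero
        (h k (mem_Icc.2 ⟨hk0, by omega⟩))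
  rw [eval_add, eval_pow, eval_X, zero_pow (by omega), zero_add, hw0] at hval
  exact mul_ne_zero (mul_ne_zero (pow_ne_zero _ (neg_ne_zero.2 one_ne_zero)) (pow_ne_zero _ ha))
    (Nat.cast_ne_zero.2 (Nat.choose_pos (by omega)).ne') hval.symm

end CharZero

end Polynomial

theorem Finset.sum_Icc_one_eq_add_sum_Icc_two {M : Type*} [AddCommMonoid M] {n : ℕ} (hn : 1 ≤ n)
    (f : ℕ → M) : ∑ i ∈ Icc 1 n, f i = f 1 + ∑ i ∈ Icc 2 n, f i := by
  rw [← insert_Icc_add_one_left_eq_Icc hn, sum_insert (by simp)]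
  rfl

section GammaTail

variable {R : Type*} [CommRing R]

noncomputable def gammaTail (K : ℕ) (c : ℕ → R) : R[X] :=
  ∑ i ∈ Icc 2 (K - 1), C (c i) * X ^ (K - i)

theorem natDegree_gammaTail_lt {K : ℕ} (hK : 2 ≤ K) (c : ℕ → R) :
    (gammaTail K c).natDegree < K - 1 := by
  refine lt_of_le_of_lt (natDegree_sum_le_of_forall_le _ _ fun i hi => ?_)
    (by omega : K - 2 < K - 1)
  rw [mem_Icc] at hi
  exact (natDegree_C_mul_X_pow_le _ _).trans (by omega)

theorem eval_zero_gammaTail (K : ℕ) (c : ℕ → R) : (gammaTail K c).eval 0 = 0 := by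
  simp only [gammaTail, eval_finsetSum, eval_mul, eval_C, eval_pow, eval_X]
  exact sum_eq_zero fun i hi => by rw [zero_pow (by grind), mul_zero]

theorem eval_one_gammaTail (K : ℕ) (c : ℕ → R) :
    (gammaTail K c).eval 1 = ∑ i ∈ Icc 2 (K - 1), c i := by
  simp [gammaTail, eval_finsetSum]

theorem eval_X_pow_add_gammaTail_add_C_mul {K : ℕ} (hK : 2 ≤ K) (α β : ℕ → R) (x1 s : R) :
    (X ^ (K + 1) + gammaTail K α + C x1 * (X ^ (K - 1) + gammaTail K β)).eval s =
      s ^ (K + 1) +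
        ∑ i ∈ Icc 1 (K - 1), (if i = 1 then x1 else α i + β i * x1) * s ^ (K - i) := by
  rw [sum_Icc_one_eq_add_sum_Icc_two (by omega), if_pos rfl,
    sum_congr rfl fun i hi => by rw [if_neg (by grind)]]
  simp only [gammaTail, eval_add, eval_mul, eval_C, eval_pow, eval_X, eval_finsetSum, add_mul,
    mul_add, sum_add_distrib, mul_sum]
  ring_nf

theorem sum_substituted_gamma_eq {K : ℕ} (hK : 2 ≤ K) (α β : ℕ → R) (x1 t : R) :
    t ^ (K + 1) + ∑ i ∈ Icc 1 (K - 1),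
        (if i = 1 then x1 else α i * t ^ (i + 1) + β i * x1 * t ^ (i - 1)) * t ^ (K - i) =
      (1 + ∑ i ∈ Icc 2 (K - 1), α i) * t ^ (K + 1) +
        (1 + ∑ i ∈ Icc 2 (K - 1), β i) * x1 * t ^ (K - 1) := by
  have hterm : ∀ i ∈ Icc 2 (K - 1),
      (if i = 1 then x1 else α i * t ^ (i + 1) + β i * x1 * t ^ (i - 1)) * t ^ (K - i) =
        α i * t ^ (K + 1) + β i * x1 * t ^ (K - 1) := by
    intro i hi
    rw [mem_Icc] at hi
    rw [if_neg (by omega), add_mul, mul_assoc, mul_assoc, ← pow_add, ← pow_add,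
      show i + 1 + (K - i) = K + 1 by omega, show i - 1 + (K - i) = K - 1 by omega]
  rw [sum_Icc_one_eq_add_sum_Icc_two (by omega), if_pos rfl, sum_congr rfl hterm,
    sum_add_distrib, ← sum_mul, ← sum_mul, ← sum_mul]
  ring

theorem eval_one_X_pow_add_gammaTail_ne_zero [IsDomain R] [CharZero R] {K N : ℕ} (hK : 2 ≤ K)
    (hN : K - 1 ≤ N) {c : ℕ → R}
    (h : ∀ j ∈ Icc 1 (K - 2), (derivative^[j] (X ^ N + gammaTail K c)).eval 1 = 0) :
    (X ^ N + gammaTail K c).eval 1 ≠ 0 :=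
  eval_X_pow_add_ne_zero_of_eval_iterate_derivative_eq_zero one_ne_zero (by omega) hN
    (natDegree_gammaTail_lt hK c) (eval_zero_gammaTail K c) (by rwa [Nat.sub_sub])

end GammaTail

/-- For `K ≥ 3`, if `α_r, β_r` (`r = 2, …, K-1`) are constants such that the system
`∂^j γ/∂t^j (x,t) = 0` for `j = 1, …, K-2` is equivalent to
`x r = α r * t^(r+1) + β r * x 1 * t^(r-1)` for `r = 2, …, K-1`, then there are
nonzero constants `A`, `B` such that substituting these relations into `γ` gives
`A * t^(K+1) + B * x_1 * t^(K-1)`, where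
`γ(x,t) = t^(K+1) + ∑_{i=1}^{K-1} x i * t^(K-i)`. -/
theorem stmt5 (K : ℕ) (hK : 3 ≤ K) (α β : ℕ → ℝ)
    (h : ∀ (x : ℕ → ℝ) (t : ℝ),
        (∀ j ∈ Finset.Icc 1 (K - 2),
            iteratedDeriv j
              (fun s : ℝ => s ^ (K + 1) + ∑ i ∈ Finset.Icc 1 (K - 1), x i * s ^ (K - i)) t = 0)
          ↔ (∀ r ∈ Finset.Icc 2 (K - 1),
              x r = α r * t ^ (r + 1) + β r * x 1 * t ^ (r - 1))) :
    ∃ A B : ℝ, A ≠ 0 ∧ B ≠ 0 ∧ ∀ (x1 t : ℝ),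
      t ^ (K + 1) + ∑ i ∈ Finset.Icc 1 (K - 1),
          (if i = 1 then x1 else α i * t ^ (i + 1) + β i * x1 * t ^ (i - 1)) * t ^ (K - i)
        = A * t ^ (K + 1) + B * x1 * t ^ (K - 1) := by
  set P : ℝ[X] := X ^ (K + 1) + gammaTail K α
  set Q : ℝ[X] := X ^ (K - 1) + gammaTail K β
  have hPQ (x1 : ℝ) (j : ℕ) (hj : j ∈ Icc 1 (K - 2)) :
      (derivative^[j] P).eval 1 + x1 * (derivative^[j] Q).eval 1 = 0 := by
    have hsolves := (h (fun i => if i = 1 then x1 else α i + β i * x1) 1).2 fun r hr => by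
      rw [if_neg (by grind), if_pos rfl]; simp
    simp_rw [← eval_X_pow_add_gammaTail_add_C_mul (by omega : 2 ≤ K), iteratedDeriv_eval_s5]
      at hsolves
    have := hsolves j hj
    rwa [iterate_map_add, iterate_derivative_C_mul, eval_add, eval_mul, eval_C] at this
  have hP (j : ℕ) (hj : j ∈ Icc 1 (K - 2)) : (derivative^[j] P).eval 1 = 0 := by
    simpa using hPQ 0 j hj
  have hQ (j : ℕ) (hj : j ∈ Icc 1 (K - 2)) : (derivative^[j] Q).eval 1 = 0 := by
    simpa [hP j hj] using hPQ 1 j hj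
  refine ⟨_, _, ?_, ?_, sum_substituted_gamma_eq (by omega) α β⟩
  · simpa [P, eval_one_gammaTail] using
      eval_one_X_pow_add_gammaTail_ne_zero (by omega) (by omega) hP
  · simpa [Q, eval_one_gammaTail] using
      eval_one_X_pow_add_gammaTail_ne_zero (by omega) le_rfl hQ
end
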